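/- For all a > 0 and all λ > 0, the integral over (0,∞) of e^{−λx} · (1/(4√π)) x^{−5/2} e^{−a²/(4x)} (a² + 2x) dx equals √λ e^{−a√λ} + (2/a) e^{−a√λ}. In particular, ∫₀^∞ e^{−λx} |h_a(x)| dx ≤ √λ e^{−a√λ} + (2/a) e^{−a√λ}, where h_a(x) = (1/(4√π)) x^{−5/2} e^{−a²/(4x)} (a² − 2x). -/

import Mathlib

/-!
With `l = s²`, the integrand `e^{-s²x} (4√π)⁻¹ x^{-5/2} e^{-a²/(4x)} (a² + 2x)` is nonnegative and
has the closed-form primitive `laplacePrimitive`, assembled from `x^{-1/2} e^{-s²x - a²/(4x)}` and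
the Gaussian primitive `G t = ∫₀ᵗ e^{-u²}` evaluated at `s√x ∓ a/(2√x)`. The identity
`(s√x + c/(2√x))² = s²x + sc + c²/(4x)` turns `e^{-(s√x ± a/(2√x))²}` into
`e^{∓as} e^{-s²x - a²/(4x)}`, which is what makes the derivative collapse to the integrand.
As `x → 0⁺` the two arguments of `G` tend to `∓∞`, as `x → ∞` both tend to `+∞`, so the integral
is `(s + 2/a) e^{-as}`. The statement about `|h_a|` then follows from `|a² - 2x| ≤ a² + 2x`.
-/

open Real MeasureTheory Set Filter Topology

theorem integral_Ioi_of_hasDerivAt_of_nonneg_of_tendsto {f f' : ℝ → ℝ} {a m₀ m : ℝ}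
    (h₀ : Tendsto f (𝓝[>] a) (𝓝 m₀)) (hderiv : ∀ x ∈ Ioi a, HasDerivAt f (f' x) x)
    (hnonneg : ∀ x ∈ Ioi a, 0 ≤ f' x) (htop : Tendsto f atTop (𝓝 m)) :
    IntegrableOn f' (Ioi a) ∧ ∫ x in Ioi a, f' x = m - m₀ := by
  classical
  set g := Function.update f a m₀
  have hcont : ContinuousWithinAt g (Ici a) a := by
    rwa [continuousWithinAt_update_same, Ici_sdiff_left]
  have hderiv' : ∀ x ∈ Ioi a, HasDerivAt g (f' x) x := fun x hx =>
    (hderiv x hx).congr_of_eventuallyEq <|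
      (eventually_ne_nhds (ne_of_gt hx)).mono fun y hy => Function.update_of_ne hy _ _
  have htop' : Tendsto g atTop (𝓝 m) :=
    htop.congr' <| (eventually_ne_atTop a).mono fun x hx => (Function.update_of_ne hx _ _).symm
  refine ⟨integrableOn_Ioi_deriv_of_nonneg hcont hderiv' hnonneg htop', ?_⟩
  rw [integral_Ioi_of_hasDerivAt_of_nonneg hcont hderiv' hnonneg htop']
  simp [g]

noncomputable def gaussPrimitive (t : ℝ) : ℝ := ∫ u in (0 : ℝ)..t, exp (-u ^ 2)

theorem hasDerivAt_gaussPrimitive (t : ℝ) : HasDerivAt gaussPrimitive (exp (-t ^ 2)) t :=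
  ((by fun_prop : Continuous fun u : ℝ => exp (-u ^ 2)).integral_hasStrictDerivAt 0 t).hasDerivAt

theorem gaussPrimitive_neg (t : ℝ) : gaussPrimitive (-t) = -gaussPrimitive t := by
  simp only [gaussPrimitive]
  rw [← intervalIntegral.integral_symm, ← neg_zero, ← intervalIntegral.integral_comp_neg]
  simp

theorem tendsto_gaussPrimitive_atTop : Tendsto gaussPrimitive atTop (𝓝 (√π / 2)) := by
  have h := integral_gaussian_Ioi 1
  simp only [neg_mul, one_mul, div_one] at h
  rw [← h]
  exact intervalIntegral_tendsto_integral_Ioi 0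
    (by simpa using (integrable_exp_neg_mul_sq one_pos).integrableOn) tendsto_id

theorem tendsto_gaussPrimitive_atBot : Tendsto gaussPrimitive atBot (𝓝 (-(√π / 2))) := by
  have h := (tendsto_gaussPrimitive_atTop.comp tendsto_neg_atBot_atTop).neg
  refine h.congr fun t => ?_
  simp [gaussPrimitive_neg]

theorem tendsto_inv_sqrt_nhdsGT_zero : Tendsto (fun x : ℝ => (√x)⁻¹) (𝓝[>] 0) atTop := by
  refine (tendsto_sqrt_atTop.comp tendsto_inv_nhdsGT_zero).congr fun x => ?_
  simp [sqrt_inv]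

theorem tendsto_sqrt_nhdsGT_zero : Tendsto (fun x : ℝ => √x) (𝓝[>] 0) (𝓝 0) := by
  simpa using (continuous_sqrt.tendsto 0).mono_left nhdsWithin_le_nhds

noncomputable def sqrtSubst (s c x : ℝ) : ℝ := s * √x + c / (2 * √x)

section sqrtSubst

variable {s c x : ℝ}

theorem exp_neg_sq_sqrtSubst (hx : 0 < x) :
    exp (-sqrtSubst s c x ^ 2) = exp (-(s * c)) * exp (-(s ^ 2 * x + c ^ 2 / (4 * x))) := by
  rw [← exp_add]
  congr 1
  have hsx : 0 < √x := sqrt_pos.2 hx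
  rw [sqrtSubst]
  field_simp
  rw [sq_sqrt hx.le]
  ring

theorem hasDerivAt_sqrtSubst (hx : 0 < x) :
    HasDerivAt (sqrtSubst s c) (s / (2 * √x) - c / (4 * x * √x)) x := by
  have hsx : 0 < √x := sqrt_pos.2 hx
  have h := ((hasDerivAt_sqrt hx.ne').const_mul s).add
    ((hasDerivAt_const x c).div ((hasDerivAt_sqrt hx.ne').const_mul 2) (by positivity))
  refine h.congr_deriv ?_
  field_simp
  rw [sq_sqrt hx.le]
  ring

theorem tendsto_sqrtSubst_atTop (hs : 0 < s) : Tendsto (sqrtSubst s c) atTop atTop :=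
  (tendsto_sqrt_atTop.const_mul_atTop hs).atTop_add
    (tendsto_const_nhds.div_atTop (tendsto_sqrt_atTop.const_mul_atTop two_pos))

theorem tendsto_sqrtSubst_nhdsGT_zero_of_pos (hc : 0 < c) :
    Tendsto (sqrtSubst s c) (𝓝[>] 0) atTop := by
  have h := (tendsto_sqrt_nhdsGT_zero.const_mul s).add_atTop
    (tendsto_inv_sqrt_nhdsGT_zero.const_mul_atTop (half_pos hc))
  refine h.congr fun x => ?_
  simp only [sqrtSubst]
  ring

theorem tendsto_sqrtSubst_nhdsGT_zero_of_neg (hc : c < 0) :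
    Tendsto (sqrtSubst s c) (𝓝[>] 0) atBot := by
  have h := (tendsto_sqrt_nhdsGT_zero.const_mul s).add_atBot
    (tendsto_inv_sqrt_nhdsGT_zero.const_mul_atTop_of_neg (show c / 2 < 0 by linarith))
  refine h.congr fun x => ?_
  simp only [sqrtSubst]
  ring

end sqrtSubst

theorem rpow_neg_five_halves {x : ℝ} (hx : 0 ≤ x) : x ^ (-(5 : ℝ) / 2) = (√x ^ 5)⁻¹ := by
  rw [sqrt_eq_rpow, ← rpow_natCast, ← rpow_mul hx, ← rpow_neg hx]
  norm_num

noncomputable def laplacePrimitive (s a x : ℝ) : ℝ :=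
  (exp (-(s ^ 2 * x + a ^ 2 / (4 * x))) / √x
    + (s + 2 / a) * exp (-(a * s)) * gaussPrimitive (sqrtSubst s (-a) x)
    + (s - 2 / a) * exp (a * s) * gaussPrimitive (sqrtSubst s a x)) / √π

section laplacePrimitive

variable {s a x : ℝ}

theorem hasDerivAt_exp_div_sqrt (hx : 0 < x) :
    HasDerivAt (fun x => exp (-(s ^ 2 * x + a ^ 2 / (4 * x))) / √x)
      (exp (-(s ^ 2 * x + a ^ 2 / (4 * x))) * (a ^ 2 / (4 * x ^ 2) - s ^ 2 - 1 / (2 * x)) / √x)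
      x := by
  have hsx : 0 < √x := sqrt_pos.2 hx
  have hexponent : HasDerivAt (fun x => -(s ^ 2 * x + a ^ 2 / (4 * x)))
      (a ^ 2 / (4 * x ^ 2) - s ^ 2) x := by
    have h := (((hasDerivAt_id x).const_mul (s ^ 2)).add
      ((hasDerivAt_const x (a ^ 2)).div ((hasDerivAt_id x).const_mul 4) (by simp [hx.ne']))).neg
    refine h.congr_deriv ?_
    simp only [id]
    field_simp
    ring
  refine (hexponent.exp.div (hasDerivAt_sqrt hx.ne') hsx.ne').congr_deriv ?_
  have hsx2 : √x ^ 2 = x := sq_sqrt hx.le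
  generalize √x = t at hsx hsx2 ⊢
  subst hsx2
  field_simp

theorem hasDerivAt_gaussPrimitive_sqrtSubst (c : ℝ) (hx : 0 < x) :
    HasDerivAt (fun x => gaussPrimitive (sqrtSubst s c x))
      (exp (-(s * c)) * exp (-(s ^ 2 * x + c ^ 2 / (4 * x))) * (s / (2 * √x) - c / (4 * x * √x)))
      x := by
  rw [← exp_neg_sq_sqrtSubst hx]
  exact (hasDerivAt_gaussPrimitive _).comp x (hasDerivAt_sqrtSubst hx)

theorem hasDerivAt_laplacePrimitive (ha : a ≠ 0) (hx : 0 < x) :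
    HasDerivAt (laplacePrimitive s a)
      (exp (-s ^ 2 * x) *
        (1 / (4 * √π) * x ^ (-(5 : ℝ) / 2) * exp (-a ^ 2 / (4 * x)) * (a ^ 2 + 2 * x))) x := by
  have h := (((hasDerivAt_exp_div_sqrt (s := s) (a := a) hx).add
    ((hasDerivAt_gaussPrimitive_sqrtSubst (s := s) (-a) hx).const_mul
      ((s + 2 / a) * exp (-(a * s))))).add
    ((hasDerivAt_gaussPrimitive_sqrtSubst (s := s) a hx).const_mul
      ((s - 2 / a) * exp (a * s)))).div_const √π
  refine h.congr_deriv ?_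
  have hE : exp (-(s ^ 2 * x + a ^ 2 / (4 * x))) =
      exp (-s ^ 2 * x) * exp (-a ^ 2 / (4 * x)) := by
    rw [← exp_add]; ring_nf
  rw [neg_sq, hE, rpow_neg_five_halves hx.le, show -(s * -a) = a * s by ring,
    show -(s * a) = -(a * s) by ring, exp_neg (a * s)]
  have hsx : 0 < √x := sqrt_pos.2 hx
  have hsx2 : √x ^ 2 = x := sq_sqrt hx.le
  -- substituting `x = t²` makes the identity rational in `t`
  generalize √x = t at hsx hsx2 ⊢
  subst hsx2
  field_simp
  ring

theorem tendsto_exp_neg_div_div_sqrt_nhdsGT_zero {c : ℝ} (hc : 0 < c) :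
    Tendsto (fun x => exp (-(c / x)) / √x) (𝓝[>] 0) (𝓝 0) := by
  refine ((tendsto_rpow_mul_exp_neg_mul_atTop_nhds_zero (1 / 2) c hc).comp
    tendsto_inv_nhdsGT_zero).congr' ?_
  filter_upwards [self_mem_nhdsWithin] with x (hx : 0 < x)
  simp only [Function.comp, ← sqrt_eq_rpow, sqrt_inv]
  field_simp

theorem tendsto_exp_div_sqrt_atTop :
    Tendsto (fun x => exp (-(s ^ 2 * x + a ^ 2 / (4 * x))) / √x) atTop (𝓝 0) := by
  refine squeeze_zero' (.of_forall fun x => by positivity) ?_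
    (tendsto_inv_atTop_zero.comp tendsto_sqrt_atTop)
  filter_upwards [eventually_gt_atTop 0] with x hx
  rw [Function.comp, div_eq_mul_inv]
  refine mul_le_of_le_one_left (by positivity) (exp_le_one_iff.2 ?_)
  have : 0 ≤ a ^ 2 / (4 * x) := by positivity
  nlinarith [sq_nonneg s]

theorem tendsto_exp_div_sqrt_nhdsGT_zero (ha : a ≠ 0) :
    Tendsto (fun x => exp (-(s ^ 2 * x + a ^ 2 / (4 * x))) / √x) (𝓝[>] 0) (𝓝 0) := by
  refine squeeze_zero' (.of_forall fun x => by positivity) ?_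
    (tendsto_exp_neg_div_div_sqrt_nhdsGT_zero (c := a ^ 2 / 4) (by positivity))
  filter_upwards [self_mem_nhdsWithin] with x (hx : 0 < x)
  gcongr
  rw [div_div]
  nlinarith [sq_nonneg s]

theorem tendsto_laplacePrimitive_atTop (hs : 0 < s) :
    Tendsto (laplacePrimitive s a) atTop
      (𝓝 (((s + 2 / a) * exp (-(a * s)) + (s - 2 / a) * exp (a * s)) / 2)) := by
  have h := (((tendsto_exp_div_sqrt_atTop (s := s) (a := a)).add
    ((tendsto_gaussPrimitive_atTop.comp (tendsto_sqrtSubst_atTop (c := -a) hs)).const_mul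
      ((s + 2 / a) * exp (-(a * s))))).add
    ((tendsto_gaussPrimitive_atTop.comp (tendsto_sqrtSubst_atTop (c := a) hs)).const_mul
      ((s - 2 / a) * exp (a * s)))).div_const √π
  convert h using 2
  · rfl
  · field_simp
    ring

theorem tendsto_laplacePrimitive_nhdsGT_zero (ha : 0 < a) :
    Tendsto (laplacePrimitive s a) (𝓝[>] 0)
      (𝓝 ((-((s + 2 / a) * exp (-(a * s))) + (s - 2 / a) * exp (a * s)) / 2)) := by
  have h := (((tendsto_exp_div_sqrt_nhdsGT_zero (s := s) ha.ne').add
    ((tendsto_gaussPrimitive_atBot.comp (tendsto_sqrtSubst_nhdsGT_zero_of_neg (s := s)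
      (neg_neg_of_pos ha))).const_mul ((s + 2 / a) * exp (-(a * s))))).add
    ((tendsto_gaussPrimitive_atTop.comp
      (tendsto_sqrtSubst_nhdsGT_zero_of_pos (s := s) ha)).const_mul
        ((s - 2 / a) * exp (a * s)))).div_const √π
  convert h using 2
  · rfl
  · field_simp
    ring

theorem integrableOn_laplace_and_integral_eq (ha : 0 < a) (hs : 0 < s) :
    IntegrableOn (fun x => exp (-s ^ 2 * x) *
        (1 / (4 * √π) * x ^ (-(5 : ℝ) / 2) * exp (-a ^ 2 / (4 * x)) * (a ^ 2 + 2 * x))) (Ioi 0) ∧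
      ∫ x in Ioi 0, exp (-s ^ 2 * x) *
        (1 / (4 * √π) * x ^ (-(5 : ℝ) / 2) * exp (-a ^ 2 / (4 * x)) * (a ^ 2 + 2 * x))
        = (s + 2 / a) * exp (-(a * s)) := by
  obtain ⟨hint, heq⟩ := integral_Ioi_of_hasDerivAt_of_nonneg_of_tendsto
    (tendsto_laplacePrimitive_nhdsGT_zero ha) (fun x hx => hasDerivAt_laplacePrimitive ha.ne' hx)
    (fun x (hx : 0 < x) => by positivity) (tendsto_laplacePrimitive_atTop hs)
  exact ⟨hint, heq.trans (by ring)⟩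

end laplacePrimitive

theorem abs_mul_sub_le_mul_add {c u v : ℝ} (hc : 0 ≤ c) (hu : 0 ≤ u) (hv : 0 ≤ v) :
    |c * (u - v)| ≤ c * (u + v) := by
  rw [abs_mul, abs_of_nonneg hc]
  exact mul_le_mul_of_nonneg_left (abs_sub_le_iff.2 ⟨by linarith, by linarith⟩) hc

/-- For `a > 0` and `λ > 0`, the integral of
`e^{-λx} (1/(4√π)) x^{-5/2} e^{-a²/(4x)} (a² + 2x)` over `(0,∞)` equals
`√λ e^{-a√λ} + (2/a) e^{-a√λ}`; in particular `x ↦ e^{-λx} |h_a(x)|` is integrable on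
`(0,∞)` and its integral is bounded by the same quantity, where
`h_a(x) = (1/(4√π)) x^{-5/2} e^{-a²/(4x)} (a² - 2x)`. -/
theorem laplace_abs_ha_bound (a l : ℝ) (ha : 0 < a) (hl : 0 < l) :
    (∫ x in Set.Ioi (0 : ℝ),
      Real.exp (-l * x) *
        (1 / (4 * Real.sqrt Real.pi) * x ^ (-(5 : ℝ) / 2) * Real.exp (-a ^ 2 / (4 * x)) *
          (a ^ 2 + 2 * x))
      = Real.sqrt l * Real.exp (-a * Real.sqrt l) + (2 / a) * Real.exp (-a * Real.sqrt l)) ∧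
    MeasureTheory.IntegrableOn
      (fun x : ℝ => Real.exp (-l * x) *
        |1 / (4 * Real.sqrt Real.pi) * x ^ (-(5 : ℝ) / 2) * Real.exp (-a ^ 2 / (4 * x)) *
          (a ^ 2 - 2 * x)|) (Set.Ioi (0 : ℝ)) ∧
    (∫ x in Set.Ioi (0 : ℝ),
      Real.exp (-l * x) *
        |1 / (4 * Real.sqrt Real.pi) * x ^ (-(5 : ℝ) / 2) * Real.exp (-a ^ 2 / (4 * x)) *
          (a ^ 2 - 2 * x)|
      ≤ Real.sqrt l * Real.exp (-a * Real.sqrt l) + (2 / a) * Real.exp (-a * Real.sqrt l)) := by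
  obtain ⟨s, hs, rfl⟩ : ∃ s, 0 < s ∧ l = s ^ 2 := ⟨√l, sqrt_pos.2 hl, (sq_sqrt hl.le).symm⟩
  obtain ⟨hint, heq⟩ := integrableOn_laplace_and_integral_eq ha hs
  have hval : (s + 2 / a) * exp (-(a * s)) = √(s ^ 2) * exp (-a * √(s ^ 2))
      + 2 / a * exp (-a * √(s ^ 2)) := by
    rw [sqrt_sq hs.le, neg_mul]
    ring
  have hdom : ∀ x ∈ Ioi (0 : ℝ), exp (-s ^ 2 * x) *
        |1 / (4 * √π) * x ^ (-(5 : ℝ) / 2) * exp (-a ^ 2 / (4 * x)) * (a ^ 2 - 2 * x)|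
        ≤ exp (-s ^ 2 * x) *
          (1 / (4 * √π) * x ^ (-(5 : ℝ) / 2) * exp (-a ^ 2 / (4 * x)) * (a ^ 2 + 2 * x)) :=
    fun x (hx : 0 < x) => mul_le_mul_of_nonneg_left
      (abs_mul_sub_le_mul_add (by positivity) (sq_nonneg a) (by positivity)) (exp_pos _).le
  have hint' : IntegrableOn (fun x : ℝ => exp (-s ^ 2 * x) *
      |1 / (4 * √π) * x ^ (-(5 : ℝ) / 2) * exp (-a ^ 2 / (4 * x)) * (a ^ 2 - 2 * x)|) (Ioi 0) :=
    hint.mono' (by fun_prop : Measurable _).aestronglyMeasurable <|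
      (ae_restrict_iff' measurableSet_Ioi).2 <| .of_forall fun x hx => by
        rw [norm_of_nonneg (by positivity)]
        exact hdom x hx
  exact ⟨heq.trans hval, hint',
    (setIntegral_mono_on hint' hint measurableSet_Ioi hdom).trans (heq.trans hval).le⟩
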